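/- Fix real parameters τ > 0 and m > 0. Let A be a nonnegative real random variable with P(A ≥ x) = ∫₀^1 exp(-x^{1/τ} · 2^r / m) dr for every x > 0. Then τ^{-2} · Var(A) / (E[A])² = τ^{-2} · ( (Γ(2τ)·log 2 / Γ(τ)²) · (1 + 2^{-τ})/(1 - 2^{-τ}) - 1 ). -/

import Mathlib

open MeasureTheory Real ProbabilityTheory Set

lemma aux_integrableOn {p q b : ℝ} (hp : 0 < p) (hq : -1 < q) (hb : 0 < b) :
    IntegrableOn (fun x : ℝ => x ^ q * Real.exp (-(b * x ^ p))) (Set.Ioi 0) := by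
  have hq' : -1 < (q + 1) / p - 1 := by
    have : 0 < (q + 1) / p := div_pos (by linarith) hp
    linarith
  have h1 : IntegrableOn (fun y : ℝ => y ^ ((q + 1) / p - 1) * Real.exp (-(b * y)))
      (Set.Ioi 0) := by
    have := integrableOn_rpow_mul_exp_neg_mul_rpow hq' one_pos hb
    refine this.congr_fun (fun x hx => ?_) measurableSet_Ioi
    simp only [Real.rpow_one, neg_mul]
  have h2 := (integrableOn_Ioi_comp_rpow_iff'
      (fun y : ℝ => y ^ ((q + 1) / p - 1) * Real.exp (-(b * y))) hp.ne').mpr h1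
  refine h2.congr_fun (fun x hx => ?_) measurableSet_Ioi
  have hx0 : (0:ℝ) < x := hx
  have : (x ^ p) ^ ((q + 1) / p - 1) = x ^ (q + 1 - p) := by
    rw [← Real.rpow_mul hx0.le]
    congr 1
    field_simp
  simp only [smul_eq_mul, this]
  rw [← mul_assoc, ← Real.rpow_add hx0]
  ring_nf

lemma aux_gamma_integral {p q b : ℝ} (hp : 0 < p) (hq : -1 < q) (hb : 0 < b) :
    ∫ x in Set.Ioi (0:ℝ), x ^ q * Real.exp (-(b * x ^ p)) =
      b ^ (-(q + 1) / p) * (1 / p) * Real.Gamma ((q + 1) / p) := by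
  rw [← integral_rpow_mul_exp_neg_mul_rpow hp hq hb]
  refine setIntegral_congr_fun measurableSet_Ioi (fun x hx => ?_)
  rw [neg_mul]

lemma aux_exp_integral {c : ℝ} (hc : c ≠ 0) :
    ∫ r in (0:ℝ)..1, Real.exp (c * r) = (Real.exp c - 1) / c := by
  have D : ∀ x : ℝ, HasDerivAt (fun y : ℝ => Real.exp (c * y) / c) (Real.exp (c * x)) x := by
    intro x
    have := ((Real.hasDerivAt_exp (c * x)).comp x ((hasDerivAt_id x).const_mul c))
    have h2 := this.div_const c
    simp only [Function.comp] at h2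
    rw [show Real.exp (c * x) = Real.exp (c * x) * (c * 1) / c by field_simp]
    exact h2
  rw [intervalIntegral.integral_eq_sub_of_hasDerivAt (fun x _ => D x)
    ((Real.continuous_exp.comp (continuous_const.mul continuous_id)).intervalIntegrable 0 1)]
  simp [sub_div]

lemma two_rpow_eq (r : ℝ) : (2:ℝ) ^ r = Real.exp (Real.log 2 * r) :=
  Real.rpow_def_of_pos two_pos r

lemma tGRA_moment {Ω : Type*} [MeasurableSpace Ω] (P : Measure Ω) [IsProbabilityMeasure P]
    (τ m : ℝ) (hτ : 0 < τ) (hm : 0 < m)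
    (A : Ω → ℝ) (hA : Measurable A) (hA0 : ∀ ω, 0 ≤ A ω)
    (htail : ∀ x > 0, P {ω | x ≤ A ω} =
      ENNReal.ofReal (∫ r in (0:ℝ)..1, Real.exp (-(x ^ τ⁻¹ * 2 ^ r / m))))
    {s : ℝ} (hs : 1 ≤ s) :
    ∫⁻ ω, ENNReal.ofReal (A ω ^ s) ∂P =
      ENNReal.ofReal (Real.Gamma (s * τ) * m ^ (s * τ) *
        (1 - 2 ^ (-(s * τ))) / Real.log 2) := by
  have hs0 : (0:ℝ) < s := lt_of_lt_of_le one_pos hs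
  have hL : (0:ℝ) < Real.log 2 := Real.log_pos one_lt_two
  have hst : (0:ℝ) < s * τ := mul_pos hs0 hτ
  rw [lintegral_rpow_eq_lintegral_meas_le_mul P (Filter.Eventually.of_forall hA0)
    hA.aemeasurable hs0]
  -- step 2 : rewrite tail as inner lintegral
  have step2 : ∫⁻ t in Ioi (0:ℝ), P {a | t ≤ A a} * ENNReal.ofReal (t ^ (s - 1)) =
      ∫⁻ t in Ioi (0:ℝ), ∫⁻ r in Ioc (0:ℝ) 1,
        ENNReal.ofReal (t ^ (s - 1) * Real.exp (-(t ^ τ⁻¹ * 2 ^ r / m))) := by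
    refine setLIntegral_congr_fun measurableSet_Ioi
      (fun t ht => ?_)
    have ht0 : (0:ℝ) < t := ht
    have hcont : Continuous fun r : ℝ => Real.exp (-(t ^ τ⁻¹ * 2 ^ r / m)) := by
      simp only [two_rpow_eq]
      fun_prop
    have hint : IntegrableOn (fun r : ℝ => Real.exp (-(t ^ τ⁻¹ * 2 ^ r / m))) (Ioc 0 1) :=
      hcont.integrableOn_Ioc
    rw [htail t ht0, intervalIntegral.integral_of_le zero_le_one,
      ofReal_integral_eq_lintegral_ofReal hint
        (Filter.Eventually.of_forall fun r => (Real.exp_pos _).le),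
      ← lintegral_mul_const'' (ENNReal.ofReal (t ^ (s - 1)))
        (hcont.measurable.ennreal_ofReal.aemeasurable)]
    congr 1 with r
    rw [← ENNReal.ofReal_mul (Real.exp_pos _).le, mul_comm]
  rw [step2]
  -- step 3 : swap order of integration
  have mble : Measurable fun q : ℝ × ℝ =>
      ENNReal.ofReal (q.1 ^ (s - 1) * Real.exp (-(q.1 ^ τ⁻¹ * 2 ^ q.2 / m))) := by
    apply Measurable.ennreal_ofReal
    apply Continuous.measurable
    simp only [two_rpow_eq]
    have h1 : Continuous fun q : ℝ × ℝ => q.1 ^ (s - 1) :=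
      (Real.continuous_rpow_const (by linarith)).comp continuous_fst
    have h2 : Continuous fun q : ℝ × ℝ => q.1 ^ τ⁻¹ :=
      (Real.continuous_rpow_const (by positivity)).comp continuous_fst
    fun_prop
  rw [lintegral_lintegral_swap mble.aemeasurable]
  -- step 4 : inner Gamma integral
  have step4 : ∀ r ∈ Ioc (0:ℝ) 1,
      ∫⁻ t in Ioi (0:ℝ), ENNReal.ofReal (t ^ (s - 1) * Real.exp (-(t ^ τ⁻¹ * 2 ^ r / m))) =
      ENNReal.ofReal (((2:ℝ) ^ r / m) ^ (-(s * τ)) * τ * Real.Gamma (s * τ)) := by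
    intro r _
    have hb : (0:ℝ) < 2 ^ r / m := div_pos (Real.rpow_pos_of_pos two_pos r) hm
    have harg : ∀ t : ℝ, -(t ^ τ⁻¹ * 2 ^ r / m) = -((2 ^ r / m) * t ^ τ⁻¹) := by
      intro t; ring
    simp_rw [harg]
    rw [← ofReal_integral_eq_lintegral_ofReal
        (aux_integrableOn (inv_pos.mpr hτ) (by linarith : (-1:ℝ) < s - 1) hb) ?_]
    · rw [aux_gamma_integral (inv_pos.mpr hτ) (by linarith : (-1:ℝ) < s - 1) hb]
      have e1 : -(s - 1 + 1) / τ⁻¹ = -(s * τ) := by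
        rw [div_eq_mul_inv, inv_inv]; ring
      have e2 : (s - 1 + 1) / τ⁻¹ = s * τ := by
        rw [div_eq_mul_inv, inv_inv]; ring
      rw [e1, e2, one_div, inv_inv]
    · filter_upwards [self_mem_ae_restrict (measurableSet_Ioi : MeasurableSet (Ioi (0:ℝ)))]
        with t ht
      have : (0:ℝ) < t := ht
      positivity
  rw [setLIntegral_congr_fun measurableSet_Ioc
    (fun r hr => step4 r hr)]
  -- step 5 : outer integral
  have hc : (-(s * τ) * Real.log 2) ≠ 0 := by
    apply ne_of_lt
    exact mul_neg_of_neg_of_pos (neg_neg_iff_pos.mpr hst) hL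
  have hrw : ∀ r : ℝ, ((2:ℝ) ^ r / m) ^ (-(s * τ)) * τ * Real.Gamma (s * τ) =
      Real.exp ((-(s * τ) * Real.log 2) * r) * (m ^ (s * τ) * τ * Real.Gamma (s * τ)) := by
    intro r
    rw [Real.div_rpow (Real.rpow_nonneg two_pos.le r) hm.le,
      ← Real.rpow_mul (by norm_num : (0:ℝ) ≤ 2),
      Real.rpow_def_of_pos two_pos (r * -(s * τ)),
      Real.rpow_neg hm.le, div_eq_mul_inv, inv_inv,
      show Real.log 2 * (r * -(s * τ)) = -(s * τ) * Real.log 2 * r from by ring]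
    ring
  simp_rw [hrw]
  have hK : (0:ℝ) ≤ m ^ (s * τ) * τ * Real.Gamma (s * τ) :=
    mul_nonneg (mul_nonneg (Real.rpow_nonneg hm.le _) hτ.le)
      (Real.Gamma_pos_of_pos hst).le
  have hcont5 : Continuous fun r : ℝ =>
      Real.exp (-(s * τ) * Real.log 2 * r) * (m ^ (s * τ) * τ * Real.Gamma (s * τ)) := by
    fun_prop
  rw [← ofReal_integral_eq_lintegral_ofReal hcont5.integrableOn_Ioc
    (Filter.Eventually.of_forall fun r => mul_nonneg (Real.exp_pos _).le hK),
    ← intervalIntegral.integral_of_le zero_le_one,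
    intervalIntegral.integral_mul_const, aux_exp_integral hc,
    ← ENNReal.ofReal_mul hs0.le]
  congr 1
  rw [show -(s * τ) * Real.log 2 = Real.log 2 * -(s * τ) from mul_comm _ _, ← two_rpow_eq]
  have h2 : ((2:ℝ) ^ (-(s * τ)) - 1) / (Real.log 2 * -(s * τ)) =
      (1 - 2 ^ (-(s * τ))) / (Real.log 2 * (s * τ)) := by
    rw [mul_neg, div_neg, ← neg_div, neg_sub]
  rw [h2]
  field_simp


/-- Normalized relative variance of the τ-GRA estimator for the LogLog sketch. -/
theorem tGRA_loglog_relative_variance {Ω : Type*} [MeasurableSpace Ω] (P : Measure Ω)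
    [IsProbabilityMeasure P]
    (τ m : ℝ) (hτ : 0 < τ) (hm : 0 < m)
    (A : Ω → ℝ) (hA : Measurable A) (hA0 : ∀ ω, 0 ≤ A ω)
    (htail : ∀ x > 0, P {ω | x ≤ A ω} =
      ENNReal.ofReal (∫ r in (0:ℝ)..1, Real.exp (-(x ^ τ⁻¹ * 2 ^ r / m)))) :
    (τ ^ 2)⁻¹ * variance A P / (∫ ω, A ω ∂P) ^ 2 =
      (τ ^ 2)⁻¹ * ((Real.Gamma (2 * τ) * Real.log 2 / Real.Gamma τ ^ 2) *
        ((1 + 2 ^ (-τ)) / (1 - 2 ^ (-τ))) - 1) := by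
  have hL : (0:ℝ) < Real.log 2 := Real.log_pos one_lt_two
  have hGτ : (0:ℝ) < Real.Gamma τ := Real.Gamma_pos_of_pos hτ
  have hG2τ : (0:ℝ) < Real.Gamma (2 * τ) := Real.Gamma_pos_of_pos (by positivity)
  have hu1 : (2:ℝ) ^ (-τ) < 1 :=
    Real.rpow_lt_one_of_one_lt_of_neg one_lt_two (neg_neg_iff_pos.mpr hτ)
  have hu0 : (0:ℝ) < 2 ^ (-τ) := Real.rpow_pos_of_pos two_pos _
  have hmp : (0:ℝ) < m ^ τ := Real.rpow_pos_of_pos hm _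
  set E1 : ℝ := Real.Gamma τ * m ^ τ * (1 - 2 ^ (-τ)) / Real.log 2 with hE1def
  set E2 : ℝ := Real.Gamma (2 * τ) * m ^ (2 * τ) * (1 - 2 ^ (-(2 * τ))) / Real.log 2
    with hE2def
  have hE1pos : 0 < E1 := by
    rw [hE1def]
    exact div_pos (mul_pos (mul_pos hGτ hmp) (by linarith)) hL
  have hM1 : ∫⁻ ω, ENNReal.ofReal (A ω) ∂P = ENNReal.ofReal E1 := by
    have h := tGRA_moment P τ m hτ hm A hA hA0 htail (le_refl 1)
    simpa [Real.rpow_one, one_mul, hE1def] using h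
  have hM2 : ∫⁻ ω, ENNReal.ofReal (A ω ^ 2) ∂P = ENNReal.ofReal E2 := by
    have h := tGRA_moment P τ m hτ hm A hA hA0 htail (one_le_two)
    have h2 : ∀ ω, A ω ^ (2:ℝ) = A ω ^ 2 := fun ω => by
      rw [show (2:ℝ) = ((2:ℕ):ℝ) by norm_num, Real.rpow_natCast]
    simp_rw [h2] at h
    rw [h, hE2def]
  have hIA2 : Integrable (fun ω => A ω ^ 2) P := by
    refine ⟨(hA.pow_const 2).aestronglyMeasurable, ?_⟩
    rw [hasFiniteIntegral_iff_ofReal (Filter.Eventually.of_forall fun ω => sq_nonneg _)]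
    rw [hM2]; exact ENNReal.ofReal_lt_top
  have hmem : MemLp A 2 P := (memLp_two_iff_integrable_sq hA.aestronglyMeasurable).mpr hIA2
  have hEA : ∫ ω, A ω ∂P = E1 := by
    rw [integral_eq_lintegral_of_nonneg_ae (Filter.Eventually.of_forall hA0)
      hA.aestronglyMeasurable, hM1, ENNReal.toReal_ofReal hE1pos.le]
  have hE2nn : 0 ≤ E2 := by
    have hu1' : (2:ℝ) ^ (-(2 * τ)) < 1 :=
      Real.rpow_lt_one_of_one_lt_of_neg one_lt_two (by linarith)
    rw [hE2def]
    have hm2 : (0:ℝ) < m ^ (2 * τ) := Real.rpow_pos_of_pos hm _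
    exact div_nonneg (mul_nonneg (mul_nonneg hG2τ.le hm2.le) (by linarith)) hL.le
  have hEA2 : ∫ ω, A ω ^ 2 ∂P = E2 := by
    rw [integral_eq_lintegral_of_nonneg_ae
      (Filter.Eventually.of_forall fun ω => sq_nonneg (A ω))
      (hA.pow_const 2).aestronglyMeasurable, hM2, ENNReal.toReal_ofReal hE2nn]
  have hvar : variance A P = E2 - E1 ^ 2 := by
    rw [variance_eq_sub hmem]
    have : P[A ^ 2] = ∫ ω, A ω ^ 2 ∂P := by
      congr 1
    rw [this, hEA2, hEA]
  rw [hvar, hEA, mul_div_assoc, mul_div_assoc]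
  congr 1
  have hsq : (2:ℝ) ^ (-(2 * τ)) = (2 ^ (-τ)) ^ 2 := by
    rw [← Real.rpow_natCast ((2:ℝ) ^ (-τ)) 2, ← Real.rpow_mul (by norm_num : (0:ℝ) ≤ 2)]
    norm_num
    congr 1
    ring
  have hmsq : m ^ (2 * τ) = (m ^ τ) ^ 2 := by
    rw [← Real.rpow_natCast (m ^ τ) 2, ← Real.rpow_mul hm.le]
    norm_num
    congr 1
    ring
  rw [hE2def, hE1def, hsq, hmsq]
  have h1u : (1:ℝ) - 2 ^ (-τ) ≠ 0 := by linarith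
  field_simp
  ring
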